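/- Let G be a symmetric positive semidefinite n×n integer matrix. Suppose φ : ℂ × ℂⁿ → ℂ is holomorphic on Ω = {(τ,z) : Im τ > 0} and satisfies, for all x, y ∈ ℤⁿ and all (τ,z) ∈ Ω, the elliptic transformation law φ(τ, z + τ·x + y) · exp(πi·τ·xᵀGx + 2πi·xᵀGz) = exp(πi·(x+y)ᵀG(x+y)) · φ(τ, z). Then φ(τ,z) depends on z only modulo the complex span of the radical: for every x₀ ∈ ℤⁿ with Gx₀ = 0, every c ∈ ℂ and every (τ,z) ∈ Ω one has φ(τ, z + c·x₀) = φ(τ, z). -/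

import Mathlib

/-!
Fix `τ`, `z` and an integral radical vector `x₀`, and put `f s = φ(τ, z + s x₀)`. Because
`G x₀ = 0` (and `G` is symmetric), both exponential factors in the elliptic law become `1` for the
shifts by `x₀` and by `τ x₀`, so the entire function `f` has the periods `1` and `τ`. A continuous
doubly periodic function is bounded by its values on a compact period parallelogram, and
Liouville's theorem makes `f` constant.
-/

open Matrix Set Function Bornology

lemma Complex.exists_parallelogram_add_lattice_eq (τ : ℂ) (hτ : τ.im ≠ 0) (s : ℂ) :
    ∃ a ∈ Icc (0 : ℝ) 1, ∃ b ∈ Icc (0 : ℝ) 1, ∃ m k : ℤ, s = a + b * τ + m + k * τ := by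
  set b : ℝ := s.im / τ.im
  set a : ℝ := s.re - b * τ.re
  have hs : s = a + b * τ := by
    apply Complex.ext <;> simp [a, b, hτ]
  refine ⟨Int.fract a, ⟨Int.fract_nonneg a, (Int.fract_lt_one a).le⟩,
    Int.fract b, ⟨Int.fract_nonneg b, (Int.fract_lt_one b).le⟩, ⌊a⌋, ⌊b⌋, ?_⟩
  rw [hs, Int.fract, Int.fract]
  push_cast
  ring

lemma Function.Periodic.isBounded_range_of_continuous {α : Type*} [PseudoMetricSpace α]
    {f : ℂ → α} {τ : ℂ} (hf : Continuous f) (h₁ : Periodic f 1) (hτ : Periodic f τ)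
    (hτ_im : τ.im ≠ 0) : IsBounded (range f) := by
  set P : Set ℂ := (fun p : ℝ × ℝ => (p.1 : ℂ) + p.2 * τ) '' Icc 0 1 ×ˢ Icc 0 1
  have hP : IsCompact P := (isCompact_Icc.prod isCompact_Icc).image (by fun_prop)
  refine ((hP.image hf).isBounded).subset ?_
  rintro _ ⟨s, rfl⟩
  obtain ⟨a, ha, b, hb, m, k, rfl⟩ := Complex.exists_parallelogram_add_lattice_eq τ hτ_im s
  refine ⟨a + b * τ, ⟨(a, b), ⟨ha, hb⟩, rfl⟩, ?_⟩
  rw [hτ.int_mul k, ← mul_one (m : ℂ), h₁.int_mul m]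

theorem Differentiable.apply_eq_apply_of_periodic {E : Type*} [NormedAddCommGroup E]
    [NormedSpace ℂ E] {f : ℂ → E} {τ : ℂ} (hf : Differentiable ℂ f) (h₁ : Periodic f 1)
    (hτ : Periodic f τ) (hτ_im : τ.im ≠ 0) (s t : ℂ) : f s = f t :=
  hf.apply_eq_apply_of_bounded (h₁.isBounded_range_of_continuous hf.continuous hτ hτ_im) s t

lemma dotProduct_map_mulVec_eq_zero_of_mulVec_eq_zero {ι R : Type*} [Fintype ι] [CommRing R]
    {G : Matrix ι ι ℤ} (hG : G.IsSymm) {x : ι → ℤ} (hx : G *ᵥ x = 0) (w : ι → R) :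
    (fun i => (x i : R)) ⬝ᵥ G.map (Int.cast : ℤ → R) *ᵥ w = 0 := by
  have hxR : G.map (Int.cast : ℤ → R) *ᵥ (fun i => (x i : R)) = 0 := by
    ext i
    simpa [hx, Function.comp_def] using (RingHom.map_mulVec (Int.castRingHom R) G x i).symm
  rw [dotProduct_mulVec, ← mulVec_transpose, (hG.map _).eq, hxR, zero_dotProduct]

def EllipticTransformationLaw {n : ℕ} (G : Matrix (Fin n) (Fin n) ℤ)
    (φ : ℂ × (Fin n → ℂ) → ℂ) : Prop :=
  ∀ (x y : Fin n → ℤ) (τ : ℂ) (z : Fin n → ℂ), 0 < τ.im →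
    φ (τ, z + τ • (fun i => (x i : ℂ)) + (fun i => (y i : ℂ))) *
        Complex.exp ((Real.pi : ℂ) * Complex.I * τ * (((x ⬝ᵥ G.mulVec x) : ℤ) : ℂ)
          + 2 * (Real.pi : ℂ) * Complex.I *
            ((fun i => (x i : ℂ)) ⬝ᵥ (G.map (Int.cast : ℤ → ℂ)).mulVec z)) =
      Complex.exp ((Real.pi : ℂ) * Complex.I *
          ((((x + y) ⬝ᵥ G.mulVec (x + y)) : ℤ) : ℂ)) * φ (τ, z)

namespace EllipticTransformationLaw

variable {n : ℕ} {G : Matrix (Fin n) (Fin n) ℤ} {φ : ℂ × (Fin n → ℂ) → ℂ}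
  {x₀ : Fin n → ℤ} {τ : ℂ}

lemma apply_add_radical (hell : EllipticTransformationLaw G φ) (hx₀ : G *ᵥ x₀ = 0)
    (hτ : 0 < τ.im) (z : Fin n → ℂ) :
    φ (τ, z + fun i => (x₀ i : ℂ)) = φ (τ, z) := by
  simpa [hx₀, ← Pi.zero_def] using hell 0 x₀ τ z hτ

lemma apply_add_smul_radical (hell : EllipticTransformationLaw G φ) (hG : G.IsSymm)
    (hx₀ : G *ᵥ x₀ = 0) (hτ : 0 < τ.im) (z : Fin n → ℂ) :
    φ (τ, z + τ • fun i => (x₀ i : ℂ)) = φ (τ, z) := by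
  simpa [hx₀, ← Pi.zero_def, dotProduct_map_mulVec_eq_zero_of_mulVec_eq_zero hG hx₀] using
    hell x₀ 0 τ z hτ

end EllipticTransformationLaw

theorem invariant_along_radical_of_elliptic_transformation
    {n : ℕ} (G : Matrix (Fin n) (Fin n) ℤ) (hG : G.IsSymm)
    (φ : ℂ × (Fin n → ℂ) → ℂ)
    (hol : DifferentiableOn ℂ φ {p : ℂ × (Fin n → ℂ) | 0 < p.1.im})
    (hell : ∀ (x y : Fin n → ℤ) (τ : ℂ) (z : Fin n → ℂ), 0 < τ.im →
      φ (τ, z + τ • (fun i => (x i : ℂ)) + (fun i => (y i : ℂ))) *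
          Complex.exp ((Real.pi : ℂ) * Complex.I * τ * (((x ⬝ᵥ G.mulVec x) : ℤ) : ℂ)
            + 2 * (Real.pi : ℂ) * Complex.I *
              ((fun i => (x i : ℂ)) ⬝ᵥ (G.map (Int.cast : ℤ → ℂ)).mulVec z)) =
        Complex.exp ((Real.pi : ℂ) * Complex.I *
            ((((x + y) ⬝ᵥ G.mulVec (x + y)) : ℤ) : ℂ)) * φ (τ, z)) :
    ∀ (x₀ : Fin n → ℤ), G.mulVec x₀ = 0 →
      ∀ (c : ℂ) (τ : ℂ) (z : Fin n → ℂ), 0 < τ.im →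
        φ (τ, z + c • (fun i => (x₀ i : ℂ))) = φ (τ, z) := by
  intro x₀ hx₀ c τ z hτ
  have hell : EllipticTransformationLaw G φ := hell
  set v : Fin n → ℂ := fun i => (x₀ i : ℂ)
  set f : ℂ → ℂ := fun s => φ (τ, z + s • v)
  have hf : Differentiable ℂ f := fun s =>
    (hol.differentiableAt ((isOpen_lt continuous_const
      (Complex.continuous_im.comp continuous_fst)).mem_nhds hτ)).comp s (by fun_prop)
  have h₁ : Periodic f 1 := fun s => by
    simpa [f, add_smul, add_assoc] using hell.apply_add_radical hx₀ hτ (z + s • v)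
  have hτ' : Periodic f τ := fun s => by
    simpa [f, add_smul, add_assoc] using hell.apply_add_smul_radical hG hx₀ hτ (z + s • v)
  simpa [f] using hf.apply_eq_apply_of_periodic h₁ hτ' hτ.ne' c 0
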